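/- For any central arrangement A and any m ≥ 1, the Euler operator θ_E = Σ_{|a|=m} (m!/a!) x^a ∂^a belongs to D^(m)(A); in fact θ_E(α_H x^b) = m! α_H x^b for every H ∈ A and every multi-index b with |b| = m − 1. -/

import Mathlib

open MvPolynomial

/-- The operator `∂^a = ∂_1^{a_1} ⋯ ∂_ℓ^{a_ℓ}` on `S = K[x_1,…,x_ℓ]`. -/
noncomputable def pdOp (K : Type) [CommRing K] {ℓ : ℕ} (a : Fin ℓ →₀ ℕ) :
    Module.End K (MvPolynomial (Fin ℓ) K) :=
  (List.ofFn fun i : Fin ℓ =>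
    ((pderiv i : Derivation K (MvPolynomial (Fin ℓ) K) (MvPolynomial (Fin ℓ) K)).toLinearMap) ^ (a i)).prod

/-- Multiplication by a polynomial, as a `K`-endomorphism of `S`. -/
noncomputable def mulOp (K : Type) [CommRing K] {ℓ : ℕ} (p : MvPolynomial (Fin ℓ) K) :
    Module.End K (MvPolynomial (Fin ℓ) K) :=
  LinearMap.mulLeft K p

/-- total degree `|a|` of a multi-index. -/
def mdeg {ℓ : ℕ} (a : Fin ℓ →₀ ℕ) : ℕ := a.sum fun _ n => n

/-- `a! = a_1! ⋯ a_ℓ!`. -/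
def mfact {ℓ : ℕ} (a : Fin ℓ →₀ ℕ) : ℕ := a.prod fun _ n => n.factorial

/-- The operator `Σ_a c_a ∂^a` from a finitely supported coefficient family. -/
noncomputable def sumOp (K : Type) [CommRing K] {ℓ : ℕ}
    (c : (Fin ℓ →₀ ℕ) →₀ MvPolynomial (Fin ℓ) K) :
    Module.End K (MvPolynomial (Fin ℓ) K) :=
  c.sum fun a p => p • pdOp K a

/-- `D^{(m)}(S) = ⊕_{|a|=m} S ∂^a`, as an `S`-submodule of `End_K(S)`. -/
noncomputable def Dfull (K : Type) [CommRing K] {ℓ : ℕ} (m : ℕ) :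
    Submodule (MvPolynomial (Fin ℓ) K) (Module.End K (MvPolynomial (Fin ℓ) K)) :=
  Submodule.span _ {θ | ∃ a : Fin ℓ →₀ ℕ, mdeg a = m ∧ θ = pdOp K a}

/-- Operators preserving the principal ideal `Q·S`. -/
noncomputable def stabMod (K : Type) [CommRing K] {ℓ : ℕ} (Q : MvPolynomial (Fin ℓ) K) :
    Submodule (MvPolynomial (Fin ℓ) K) (Module.End K (MvPolynomial (Fin ℓ) K)) where
  carrier := {θ | ∀ f, θ (Q * f) ∈ Ideal.span {Q}}
  add_mem' := by
    intro θ η hθ hη f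
    simpa using add_mem (hθ f) (hη f)
  zero_mem' := by intro f; simp
  smul_mem' := by
    intro p θ hθ f
    simpa [LinearMap.smul_apply, smul_eq_mul] using Ideal.mul_mem_left _ p (hθ f)

/-- `D^{(m)}` of (the ideal generated by) `Q`:
operators of order `m` preserving `Q·S`. For an arrangement with defining polynomial `Q`
this is `D^{(m)}(𝒜)`. -/
noncomputable def Dmod (K : Type) [CommRing K] {ℓ : ℕ} (m : ℕ) (Q : MvPolynomial (Fin ℓ) K) :
    Submodule (MvPolynomial (Fin ℓ) K) (Module.End K (MvPolynomial (Fin ℓ) K)) :=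
  Dfull K m ⊓ stabMod K Q

/-- `θ` is a homogeneous operator of order `m` and degree `d`. -/
def IsHomOp (K : Type) [CommRing K] {ℓ : ℕ} (m d : ℕ)
    (θ : Module.End K (MvPolynomial (Fin ℓ) K)) : Prop :=
  ∃ c : (Fin ℓ →₀ ℕ) →₀ MvPolynomial (Fin ℓ) K,
    (∀ a ∈ c.support, mdeg a = m) ∧ (∀ a, (c a).IsHomogeneous d) ∧ θ = sumOp K c

/-- A central hyperplane arrangement in `K^ℓ`, given by its (pairwise coprime,
nonzero, homogeneous of degree one) defining linear forms. -/
structure Arrangement (K : Type) [Field K] (ℓ : ℕ) where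
  forms : Finset (MvPolynomial (Fin ℓ) K)
  hom : ∀ α ∈ forms, α.IsHomogeneous 1
  ne_zero : ∀ α ∈ forms, α ≠ 0
  coprime : ∀ α ∈ forms, ∀ β ∈ forms, α ≠ β → IsCoprime α β

/-- The defining polynomial `Q = ∏_{H ∈ 𝒜} α_H`. -/
noncomputable def Arrangement.defQ {K : Type} [Field K] {ℓ : ℕ} (A : Arrangement K ℓ) :
    MvPolynomial (Fin ℓ) K :=
  ∏ α ∈ A.forms, α

/-- The coefficient matrix `M_m(θ_1,…,θ_s)` with entry `θ_j(x^{a(i)})/a(i)!`,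
for a chosen ordering `e` of the degree-`m` multi-indices. -/
noncomputable def coeffMat (K : Type) [Field K] {ℓ s : ℕ}
    (θ : Fin s → Module.End K (MvPolynomial (Fin ℓ) K))
    (e : Fin s → (Fin ℓ →₀ ℕ)) : Matrix (Fin s) (Fin s) (MvPolynomial (Fin ℓ) K) :=
  fun i j => C ((mfact (e i) : K)⁻¹) * (θ j (monomial (e i) 1))


/-!
On monomials `∂^a x^d = (∏ i, (d i).descFactorial (a i)) x^(d - a)`, so `θ_E` is diagonal:
`θ_E x^d = m! (∑_{|a| = m} ∏ i, C(d i, a i)) x^d = m! C(|d|, m) x^d` by the multivariate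
Vandermonde identity. Hence `θ_E` multiplies every homogeneous polynomial of degree `D` by
`m! C(D, m)`. As `Q` is homogeneous, `θ_E (Q f)` is a sum of multiples of the `Q f_k` and lies in
`Q S`; and `α_H x^b` is homogeneous of degree `1 + (m - 1)`, with `C(1 + (m - 1), m) = 1`.
-/

open Finset

theorem Finset.sum_finsuppAntidiag_prod_choose {ι : Type*} [DecidableEq ι] (s : Finset ι)
    (d : ι → ℕ) (m : ℕ) :
    ∑ a ∈ s.finsuppAntidiag m, ∏ i ∈ s, (d i).choose (a i) = (∑ i ∈ s, d i).choose m := by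
  have coeff_one_add_X_pow (n k : ℕ) :
      PowerSeries.coeff k ((1 + PowerSeries.X : PowerSeries ℕ) ^ n) = n.choose k := by
    rw [← Polynomial.coe_X, ← Polynomial.coe_one, ← Polynomial.coe_add, ← Polynomial.coe_pow,
      Polynomial.coeff_coe, Polynomial.coeff_one_add_X_pow, Nat.cast_id]
  -- compare the coefficients of `X ^ m` in `∏ i ∈ s, (1 + X) ^ d i = (1 + X) ^ ∑ i ∈ s, d i`
  simp only [← coeff_one_add_X_pow, ← PowerSeries.coeff_prod, prod_pow_eq_pow_sum]

section CommRing

variable {K : Type} [CommRing K] {ℓ : ℕ}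

theorem mdeg_eq_sum (a : Fin ℓ →₀ ℕ) : mdeg a = ∑ i, a i :=
  Finsupp.sum_fintype _ _ fun _ => rfl

theorem mfact_eq_prod (a : Fin ℓ →₀ ℕ) : mfact a = ∏ i, (a i).factorial :=
  Finsupp.prod_fintype _ _ fun _ => rfl

theorem mdeg_eq_iff_mem_finsuppAntidiag {a : Fin ℓ →₀ ℕ} {m : ℕ} :
    mdeg a = m ↔ a ∈ (univ : Finset (Fin ℓ)).finsuppAntidiag m := by
  simp [mem_finsuppAntidiag, mdeg_eq_sum]

theorem pderiv_pow_monomial (i : Fin ℓ) (k : ℕ) (d : Fin ℓ →₀ ℕ) (r : K) :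
    ((pderiv i).toLinearMap ^ k) (monomial d r) =
      monomial (d - Finsupp.single i k) (r * (d i).descFactorial k) := by
  induction k with
  | zero => simp
  | succ k ih =>
    rw [pow_succ', Module.End.mul_apply, ih, Derivation.coeFn_coe, pderiv_monomial,
      tsub_tsub, ← Finsupp.single_add, Finsupp.tsub_apply, Finsupp.single_eq_same,
      Nat.descFactorial_succ, Nat.cast_mul]
    ring_nf

theorem list_prod_pderiv_pow_monomial (a d : Fin ℓ →₀ ℕ) (r : K) {l : List (Fin ℓ)}
    (hl : l.Nodup) :
    (l.map fun i => (pderiv i).toLinearMap ^ a i).prod (monomial d r) =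
      monomial (d - (l.map fun i => Finsupp.single i (a i)).sum)
        (r * (l.map fun i => (d i).descFactorial (a i)).prod) := by
  induction l with
  | nil => simp
  | cons i t ih =>
    obtain ⟨hit, ht⟩ := List.nodup_cons.mp hl
    have hdi : (d - (t.map fun j => Finsupp.single j (a j)).sum) i = d i := by
      rw [Finsupp.tsub_apply, ← Finsupp.applyAddHom_apply (a := i) (_ : List _).sum,
        map_list_sum, List.map_map, List.sum_eq_zero, tsub_zero]
      simp only [List.mem_map, Function.comp_apply, Finsupp.applyAddHom_apply]
      rintro _ ⟨j, hj, rfl⟩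
      exact Finsupp.single_eq_of_ne (by rintro rfl; exact hit hj)
    simp only [List.map_cons, List.prod_cons, List.sum_cons, Module.End.mul_apply, ih ht,
      pderiv_pow_monomial, hdi, tsub_tsub, Nat.cast_mul, mul_assoc]
    rw [add_comm (List.sum _), mul_comm ((List.prod _ : ℕ) : K)]

theorem pdOp_monomial (a d : Fin ℓ →₀ ℕ) (r : K) :
    pdOp K a (monomial d r) = monomial (d - a) (r * ∏ i, (d i).descFactorial (a i)) := by
  rw [pdOp, List.ofFn_eq_map, list_prod_pderiv_pow_monomial a d r (List.nodup_finRange ℓ),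
    ← Fin.sum_univ_def, ← Fin.prod_univ_def, Finsupp.univ_sum_single]

theorem sumOp_mem_Dfull {m : ℕ} (c : (Fin ℓ →₀ ℕ) →₀ MvPolynomial (Fin ℓ) K)
    (hc : ∀ a, mdeg a ≠ m → c a = 0) : sumOp K c ∈ Dfull K m :=
  Submodule.sum_mem _ fun a ha =>
    Submodule.smul_mem _ _ <| Submodule.subset_span
      ⟨a, not_imp_comm.mp (hc a) (Finsupp.mem_support_iff.mp ha), rfl⟩

theorem mem_stabMod_of_isHomogeneous {Q : MvPolynomial (Fin ℓ) K} {n : ℕ}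
    (hQ : Q.IsHomogeneous n)
    {θ : Module.End K (MvPolynomial (Fin ℓ) K)}
    (hθ : ∀ D (p : MvPolynomial (Fin ℓ) K), p.IsHomogeneous D → ∃ c : K, θ p = c • p) :
    θ ∈ stabMod K Q := by
  intro f
  rw [← sum_homogeneousComponent f, Finset.mul_sum, map_sum]
  refine Ideal.sum_mem _ fun k _ => ?_
  obtain ⟨c, hc⟩ := hθ _ _ (hQ.mul (homogeneousComponent_isHomogeneous k f))
  rw [hc, smul_eq_C_mul, mul_left_comm]
  exact Ideal.mul_mem_right _ _ (Ideal.mem_span_singleton_self Q)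

end CommRing

section Field

variable {K : Type} [Field K] {ℓ : ℕ}

noncomputable def eulerCoeff (K : Type) [Field K] {ℓ : ℕ} (m : ℕ) :
    (Fin ℓ →₀ ℕ) →₀ MvPolynomial (Fin ℓ) K :=
  Finsupp.onFinset ((univ : Finset (Fin ℓ)).finsuppAntidiag m)
    (fun a => if mdeg a = m then C ((m.factorial : K) / (mfact a : K)) * monomial a 1 else 0)
    fun _ ha => mdeg_eq_iff_mem_finsuppAntidiag.mp (not_imp_comm.mp (if_neg ·) ha)

theorem eulerCoeff_of_mdeg_eq {m : ℕ} {a : Fin ℓ →₀ ℕ} (ha : mdeg a = m) :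
    eulerCoeff K m a = C ((m.factorial : K) / (mfact a : K)) * monomial a 1 := by
  simp [eulerCoeff, ha]

theorem eulerCoeff_of_mdeg_ne {m : ℕ} {a : Fin ℓ →₀ ℕ} (ha : mdeg a ≠ m) :
    eulerCoeff K m a = 0 := by
  simp [eulerCoeff, ha]

variable [CharZero K]

theorem eulerCoeff_mul_pdOp_monomial {m : ℕ} {a : Fin ℓ →₀ ℕ} (ha : mdeg a = m)
    (d : Fin ℓ →₀ ℕ) (r : K) :
    eulerCoeff K m a * pdOp K a (monomial d r) =
      (m.factorial * ∏ i, (d i).choose (a i)) • monomial d r := by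
  rw [eulerCoeff_of_mdeg_eq ha, pdOp_monomial, mul_assoc, monomial_mul, C_mul_monomial, one_mul,
    smul_monomial]
  by_cases had : a ≤ d
  · have hdesc : ∏ i, (d i).descFactorial (a i) = mfact a * ∏ i, (d i).choose (a i) := by
      rw [mfact_eq_prod, ← prod_mul_distrib]
      exact prod_congr rfl fun i _ => Nat.descFactorial_eq_factorial_mul_choose _ _
    have hfact : (mfact a : K) ≠ 0 := Nat.cast_ne_zero.mpr (mfact_eq_prod a ▸ by positivity)
    rw [add_tsub_cancel_of_le had, hdesc, nsmul_eq_mul]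
    push_cast
    field_simp
  · obtain ⟨i, hi⟩ : ∃ i, d i < a i := by simpa [Finsupp.le_def] using had
    rw [prod_eq_zero (mem_univ i) (Nat.descFactorial_eq_zero_iff_lt.mpr hi),
      prod_eq_zero (mem_univ i) (Nat.choose_eq_zero_of_lt hi)]
    simp

theorem sumOp_eulerCoeff_monomial (m : ℕ) (d : Fin ℓ →₀ ℕ) (r : K) :
    sumOp K (eulerCoeff K m) (monomial d r) =
      (m.factorial * (mdeg d).choose m) • monomial d r := by
  rw [sumOp, Finsupp.sum_of_support_subset (eulerCoeff K m) Finsupp.support_onFinset_subset _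
      fun a _ => zero_smul _ (pdOp K a), LinearMap.sum_apply]
  have hterm : ∀ a ∈ (univ : Finset (Fin ℓ)).finsuppAntidiag m,
      (eulerCoeff K m a • pdOp K a) (monomial d r) =
        (m.factorial * ∏ i, (d i).choose (a i)) • monomial d r := fun a ha =>
    eulerCoeff_mul_pdOp_monomial (mdeg_eq_iff_mem_finsuppAntidiag.mpr ha) d r
  rw [sum_congr rfl hterm, ← sum_smul, ← mul_sum, sum_finsuppAntidiag_prod_choose,
    ← mdeg_eq_sum]

theorem sumOp_eulerCoeff_of_isHomogeneous (m D : ℕ) {p : MvPolynomial (Fin ℓ) K}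
    (hp : p.IsHomogeneous D) :
    sumOp K (eulerCoeff K m) p = (m.factorial * D.choose m) • p := by
  rw [p.as_sum, map_sum, smul_sum]
  refine sum_congr rfl fun d hd => ?_
  rw [sumOp_eulerCoeff_monomial, mdeg, Finsupp.sum, ← hp.degree_eq_sum_deg_support hd]

end Field

theorem euler_operator_mem_general (K : Type) [Field K] [CharZero K] {ℓ : ℕ}
    (A : Arrangement K ℓ) (m : ℕ) :
    ∃ c : (Fin ℓ →₀ ℕ) →₀ MvPolynomial (Fin ℓ) K,
      (∀ a : Fin ℓ →₀ ℕ, mdeg a = m →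
        c a = C ((m.factorial : K) / (mfact a : K)) * monomial a 1) ∧
      (∀ a : Fin ℓ →₀ ℕ, mdeg a ≠ m → c a = 0) ∧
      sumOp K c ∈ Dmod K m A.defQ ∧
      ∀ α ∈ A.forms, ∀ b : Fin ℓ →₀ ℕ, mdeg b = m - 1 →
        sumOp K c (α * monomial b 1) =
          (m.factorial : MvPolynomial (Fin ℓ) K) * (α * monomial b 1) := by
  have hQ : A.defQ.IsHomogeneous (∑ _α ∈ A.forms, 1) := IsHomogeneous.prod _ _ _ A.hom
  have hstab : sumOp K (eulerCoeff K m) ∈ stabMod K A.defQ :=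
    mem_stabMod_of_isHomogeneous hQ fun D _ hp =>
      ⟨_, (sumOp_eulerCoeff_of_isHomogeneous m D hp).trans (Nat.cast_smul_eq_nsmul K _ _).symm⟩
  refine ⟨eulerCoeff K m, fun _ => eulerCoeff_of_mdeg_eq, fun _ => eulerCoeff_of_mdeg_ne,
    ⟨sumOp_mem_Dfull _ fun _ => eulerCoeff_of_mdeg_ne, hstab⟩, fun α hα b hb => ?_⟩
  have hαb : (α * monomial b 1).IsHomogeneous (1 + (m - 1)) :=
    (A.hom α hα).mul (isHomogeneous_monomial _ hb)
  have hchoose : (1 + (m - 1)).choose m = 1 := by cases m <;> simp [add_comm]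
  rw [sumOp_eulerCoeff_of_isHomogeneous m _ hαb, hchoose, mul_one, nsmul_eq_mul]

/-- The Euler operator `θ_E = Σ_{|a|=m} (m!/a!) x^a ∂^a` lies in `D^{(m)}(𝒜)`, and
`θ_E(α_H x^b) = m! · α_H x^b` for every `H ∈ 𝒜` and `|b| = m-1`. -/
theorem euler_operator_mem (K : Type) [Field K] [CharZero K] {ℓ : ℕ}
    (A : Arrangement K ℓ) (m : ℕ) (hm : 1 ≤ m) :
    ∃ c : (Fin ℓ →₀ ℕ) →₀ MvPolynomial (Fin ℓ) K,
      (∀ a : Fin ℓ →₀ ℕ, mdeg a = m →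
        c a = C ((m.factorial : K) / (mfact a : K)) * monomial a 1) ∧
      (∀ a : Fin ℓ →₀ ℕ, mdeg a ≠ m → c a = 0) ∧
      sumOp K c ∈ Dmod K m A.defQ ∧
      ∀ α ∈ A.forms, ∀ b : Fin ℓ →₀ ℕ, mdeg b = m - 1 →
        sumOp K c (α * monomial b 1) =
          (m.factorial : MvPolynomial (Fin ℓ) K) * (α * monomial b 1) :=
  euler_operator_mem_general K A m
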